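/- Let λ₁, λ₂ > 0 and let f : ℝ^m × ℝ^n → ℝ be measurable with |f(x,y)| ≤ 1 for all (x,y). Let p̄ on ℝ^m and q̄ on ℝ^n be probability densities with finite second moments and finite entropy. Define the Gibbs best responses p̄*(x) ∝ exp(−λ₂^{−1}[∫ f(x,y) q̄(y) dy + λ₁‖x‖²]) and q̄*(y) ∝ exp(λ₂^{−1}[∫ f(x,y) p̄(x) dx − λ₁‖y‖²]). Then L(p̄, q̄*) − L(p̄*, q̄) ≥ λ₂ (KL(p̄‖p̄*) + KL(q̄‖q̄*)), where L(p,q) = ∬ f(x,y) p(x) q(y) dx dy + R(p) − R(q) and R(ρ) = ∫ (λ₁‖θ‖² + λ₂ log ρ(θ)) ρ(θ) dθ. In other words, the max-min (duality) gap at (p̄, q̄) controls the KL distance to its Gibbs best responses. -/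

import Mathlib

/-!
For a bounded potential `g`, the Gibbs density `p_g ∝ exp (-(g + λ₁‖x‖²) / λ₂)` satisfies
`log p_g = -(g + λ₁‖x‖²) / λ₂ - log Z`, so for every admissible `ρ` the free energy
`∫ g ρ + R(ρ)` equals `λ₂ KL(ρ‖p_g) - λ₂ log Z`: it exceeds its value at `p_g` by exactly
`λ₂ KL(ρ‖p_g)`. Up to constants, `p ↦ L(p, q̄)` and `q ↦ -L(p̄, q)` are free energies with the
potentials `x ↦ ∫ f(x,y) q̄(y) dy` and `y ↦ -∫ f(x,y) p̄(x) dx`, whose Gibbs densities are `p̄*`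
and `q̄*`. Adding the two identities, the cross terms `L(p̄, q̄)` cancel by Fubini, and the
duality gap equals `λ₂ (KL(p̄‖p̄*) + KL(q̄‖q̄*))`.
-/

open MeasureTheory Real

noncomputable section

abbrev E (d : ℕ) := EuclideanSpace ℝ (Fin d)

def IsDensity {d : ℕ} (p : E d → ℝ) : Prop :=
  Measurable p ∧ (∀ θ, 0 ≤ p θ) ∧ ∫ θ, p θ = 1

def Admissible {d : ℕ} (p : E d → ℝ) : Prop :=
  IsDensity p ∧ Integrable (fun θ => ‖θ‖ ^ 2 * p θ) ∧
    Integrable (fun θ => p θ * Real.log (p θ))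

def KLdiv {d : ℕ} (p q : E d → ℝ) : ℝ := ∫ θ, p θ * Real.log (p θ / q θ)

def Reg {d : ℕ} (lam1 lam2 : ℝ) (p : E d → ℝ) : ℝ :=
  ∫ θ, (lam1 * ‖θ‖ ^ 2 + lam2 * Real.log (p θ)) * p θ

def Lfun {m n : ℕ} (lam1 lam2 : ℝ) (f : E m → E n → ℝ) (p : E m → ℝ) (q : E n → ℝ) : ℝ :=
  (∫ x, ∫ y, f x y * p x * q y) + Reg lam1 lam2 p - Reg lam1 lam2 q

theorem mul_exp_neg_mul_le {b : ℝ} (hb : 0 < b) (t : ℝ) :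
    t * exp (-b * t) ≤ 2 / b * exp (-(b / 2) * t) := by
  have h := (mul_exp_neg_le_exp_neg_one (b / 2 * t)).trans (exp_le_one_iff.2 (by norm_num))
  have hsplit : exp (-b * t) = exp (-(b / 2 * t)) * exp (-(b / 2) * t) := by
    rw [← exp_add]; ring_nf
  calc t * exp (-b * t) = 2 / b * (b / 2 * t * exp (-(b / 2 * t))) * exp (-(b / 2) * t) := by
        rw [hsplit]; field_simp
    _ ≤ 2 / b * 1 * exp (-(b / 2) * t) := by gcongr
    _ = 2 / b * exp (-(b / 2) * t) := by rw [mul_one]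

section Gaussian

variable {V : Type*} [NormedAddCommGroup V] [InnerProductSpace ℝ V] [FiniteDimensional ℝ V]
  [MeasurableSpace V] [BorelSpace V]

theorem integrable_exp_neg_mul_sq_norm {b : ℝ} (hb : 0 < b) :
    Integrable fun x : V => exp (-b * ‖x‖ ^ 2) :=
  .of_integral_ne_zero (by rw [GaussianFourier.integral_rexp_neg_mul_sq_norm hb]; positivity)

theorem integrable_sq_norm_mul_exp_neg_mul_sq_norm {b : ℝ} (hb : 0 < b) :
    Integrable fun x : V => ‖x‖ ^ 2 * exp (-b * ‖x‖ ^ 2) := by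
  refine ((integrable_exp_neg_mul_sq_norm (half_pos hb)).const_mul (2 / b)).mono'
    (by fun_prop) (.of_forall fun x => ?_)
  rw [norm_of_nonneg (by positivity)]
  exact mul_exp_neg_mul_le hb _

end Gaussian

section Fubini

variable {α β : Type*} [MeasurableSpace α] [MeasurableSpace β] {μ : Measure α} {ν : Measure β}
  {f : α → β → ℝ}

theorem measurable_integral_mul_snd [SFinite ν] (hf : Measurable fun z : α × β => f z.1 z.2)
    {q : β → ℝ} (hq : Measurable q) : Measurable fun x => ∫ y, f x y * q y ∂ν :=
  (hf.mul (hq.comp measurable_snd)).stronglyMeasurable.integral_prod_right'.measurable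

theorem measurable_integral_mul_fst [SFinite μ] (hf : Measurable fun z : α × β => f z.1 z.2)
    {p : α → ℝ} (hp : Measurable p) : Measurable fun y => ∫ x, f x y * p x ∂μ :=
  (hf.mul (hp.comp measurable_fst)).stronglyMeasurable.integral_prod_left'.measurable

theorem integral_integral_mul_mul_swap [SFinite μ] [SFinite ν] {C : ℝ}
    (hf : Measurable fun z : α × β => f z.1 z.2) (hfC : ∀ x y, |f x y| ≤ C)
    {p : α → ℝ} {q : β → ℝ} (hp : Integrable p μ) (hq : Integrable q ν) :
    ∫ x, ∫ y, f x y * p x * q y ∂ν ∂μ = ∫ y, (∫ x, f x y * p x ∂μ) * q y ∂ν := by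
  have hint : Integrable (fun z : α × β => f z.1 z.2 * (p z.1 * q z.2)) (μ.prod ν) :=
    (hp.mul_prod hq).bdd_mul hf.aestronglyMeasurable (.of_forall fun z => hfC z.1 z.2)
  rw [integral_integral_swap (by simpa only [Function.uncurry_def, mul_assoc] using hint)]
  simp only [integral_mul_const]

end Fubini

section Density

variable {d : ℕ} {p : E d → ℝ}

theorem IsDensity.integrable (hp : IsDensity p) : Integrable p :=
  .of_integral_ne_zero (by rw [hp.2.2]; exact one_ne_zero)

theorem IsDensity.abs_integral_mul_le {u : E d → ℝ} {C : ℝ} (hp : IsDensity p)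
    (huC : ∀ θ, |u θ| ≤ C) : |∫ θ, u θ * p θ| ≤ C :=
  calc |∫ θ, u θ * p θ| = ‖∫ θ, u θ * p θ‖ := (norm_eq_abs _).symm
    _ ≤ ∫ θ, C * p θ :=
        norm_integral_le_of_norm_le (hp.integrable.const_mul C) (.of_forall fun θ => by
          rw [norm_mul, norm_of_nonneg (hp.2.1 θ)]
          exact mul_le_mul_of_nonneg_right (huC θ) (hp.2.1 θ))
    _ = C := by rw [integral_const_mul, hp.2.2, mul_one]

theorem KLdiv_self (p : E d → ℝ) : KLdiv p p = 0 := by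
  simp [KLdiv]

end Density

def freeEnergy {d : ℕ} (lam1 lam2 : ℝ) (g : E d → ℝ) (ρ : E d → ℝ) : ℝ :=
  (∫ x, g x * ρ x) + Reg lam1 lam2 ρ

def gibbsWeight {d : ℕ} (lam1 lam2 : ℝ) (g : E d → ℝ) (x : E d) : ℝ :=
  exp (-lam2⁻¹ * (g x + lam1 * ‖x‖ ^ 2))

def gibbs {d : ℕ} (lam1 lam2 : ℝ) (g : E d → ℝ) (x : E d) : ℝ :=
  gibbsWeight lam1 lam2 g x / ∫ x', gibbsWeight lam1 lam2 g x'

section Gibbs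

variable {d : ℕ} {lam1 lam2 C : ℝ} {g : E d → ℝ}

theorem gibbsWeight_pos (x : E d) : 0 < gibbsWeight lam1 lam2 g x :=
  exp_pos _

theorem measurable_gibbsWeight (hg : Measurable g) : Measurable (gibbsWeight lam1 lam2 g) := by
  unfold gibbsWeight; fun_prop

theorem gibbsWeight_le (hlam2 : 0 < lam2) (hgC : ∀ x, |g x| ≤ C) (x : E d) :
    gibbsWeight lam1 lam2 g x ≤ exp (lam2⁻¹ * C) * exp (-(lam2⁻¹ * lam1) * ‖x‖ ^ 2) := by
  rw [gibbsWeight, ← exp_add, exp_le_exp]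
  have := mul_le_mul_of_nonneg_left (neg_le_of_abs_le (hgC x)) (inv_pos.2 hlam2).le
  linarith

variable (hlam1 : 0 < lam1) (hlam2 : 0 < lam2) (hg : Measurable g) (hgC : ∀ x, |g x| ≤ C)
include hlam1 hlam2 hg hgC

theorem integrable_gibbsWeight : Integrable (gibbsWeight lam1 lam2 g) :=
  ((integrable_exp_neg_mul_sq_norm (b := lam2⁻¹ * lam1) (by positivity)).const_mul _).mono'
    (measurable_gibbsWeight hg).aestronglyMeasurable (.of_forall fun x =>
      (norm_of_nonneg (gibbsWeight_pos x).le).trans_le (gibbsWeight_le hlam2 hgC x))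

theorem integral_gibbsWeight_pos : 0 < ∫ x, gibbsWeight lam1 lam2 g x :=
  integral_exp_pos (integrable_gibbsWeight hlam1 hlam2 hg hgC)

theorem gibbs_pos (x : E d) : 0 < gibbs lam1 lam2 g x :=
  div_pos (gibbsWeight_pos x) (integral_gibbsWeight_pos hlam1 hlam2 hg hgC)

theorem log_gibbs (x : E d) : log (gibbs lam1 lam2 g x)
    = -lam2⁻¹ * (g x + lam1 * ‖x‖ ^ 2) - log (∫ x', gibbsWeight lam1 lam2 g x') := by
  rw [gibbs, log_div (gibbsWeight_pos x).ne' (integral_gibbsWeight_pos hlam1 hlam2 hg hgC).ne',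
    gibbsWeight, log_exp]

theorem isDensity_gibbs : IsDensity (gibbs lam1 lam2 g) :=
  ⟨(measurable_gibbsWeight hg).div_const _, fun x => (gibbs_pos hlam1 hlam2 hg hgC x).le, by
    simp only [gibbs, integral_div]
    exact div_self (integral_gibbsWeight_pos hlam1 hlam2 hg hgC).ne'⟩

theorem admissible_gibbs : Admissible (gibbs lam1 lam2 g) := by
  have hZ := integral_gibbsWeight_pos hlam1 hlam2 hg hgC
  have hdens := isDensity_gibbs hlam1 hlam2 hg hgC
  have hmom : Integrable fun x => ‖x‖ ^ 2 * gibbs lam1 lam2 g x := by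
    refine ((integrable_sq_norm_mul_exp_neg_mul_sq_norm (b := lam2⁻¹ * lam1)
      (by positivity)).const_mul (exp (lam2⁻¹ * C) / ∫ x', gibbsWeight lam1 lam2 g x')).mono'
      ((measurable_norm.pow_const 2).mul hdens.1).aestronglyMeasurable (.of_forall fun x => ?_)
    rw [norm_of_nonneg (mul_nonneg (by positivity) (hdens.2.1 x)), gibbs,
      mul_div_assoc', div_mul_eq_mul_div, div_le_div_iff_of_pos_right hZ, mul_left_comm]
    exact mul_le_mul_of_nonneg_left (gibbsWeight_le hlam2 hgC x) (by positivity)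
  refine ⟨hdens, hmom, ?_⟩
  have hpot : Integrable fun x => g x * gibbs lam1 lam2 g x :=
    hdens.integrable.bdd_mul hg.aestronglyMeasurable (.of_forall hgC)
  refine (((hpot.const_mul (-lam2⁻¹)).add (hmom.const_mul (-lam2⁻¹ * lam1))).add
    (hdens.integrable.const_mul (-log (∫ x', gibbsWeight lam1 lam2 g x')))).congr
    (.of_forall fun x => ?_)
  simp only [Pi.add_apply]
  rw [log_gibbs hlam1 hlam2 hg hgC]
  ring

theorem freeEnergy_eq_KLdiv_gibbs {ρ : E d → ℝ} (hρ : Admissible ρ) :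
    freeEnergy lam1 lam2 g ρ = lam2 * KLdiv ρ (gibbs lam1 lam2 g)
      - lam2 * log (∫ x, gibbsWeight lam1 lam2 g x) := by
  set Z := ∫ x, gibbsWeight lam1 lam2 g x
  have hpot : Integrable fun x => g x * ρ x :=
    hρ.1.integrable.bdd_mul hg.aestronglyMeasurable (.of_forall hgC)
  have hreg : Integrable fun x => (lam1 * ‖x‖ ^ 2 + lam2 * log (ρ x)) * ρ x :=
    ((hρ.2.1.const_mul lam1).add (hρ.2.2.const_mul lam2)).congr
      (.of_forall fun x => by simp only [Pi.add_apply]; ring)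
  have hsum : Integrable fun x => g x * ρ x + (lam1 * ‖x‖ ^ 2 + lam2 * log (ρ x)) * ρ x :=
    hpot.add hreg
  have hpt : ∀ x, lam2 * (ρ x * log (ρ x / gibbs lam1 lam2 g x))
      = (g x * ρ x + (lam1 * ‖x‖ ^ 2 + lam2 * log (ρ x)) * ρ x) + lam2 * log Z * ρ x := by
    intro x
    rcases eq_or_ne (ρ x) 0 with h | h
    · simp [h]
    · rw [log_div h (gibbs_pos hlam1 hlam2 hg hgC x).ne', log_gibbs hlam1 hlam2 hg hgC]
      field_simp
      ring
  have hKL : lam2 * KLdiv ρ (gibbs lam1 lam2 g) = freeEnergy lam1 lam2 g ρ + lam2 * log Z := by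
    rw [KLdiv, ← integral_const_mul, integral_congr_ae (.of_forall hpt),
      integral_add hsum (hρ.1.integrable.const_mul _), integral_add hpot hreg,
      integral_const_mul, hρ.1.2.2, mul_one, freeEnergy, Reg]
  linarith

theorem freeEnergy_sub_freeEnergy_gibbs {ρ : E d → ℝ} (hρ : Admissible ρ) :
    freeEnergy lam1 lam2 g ρ - freeEnergy lam1 lam2 g (gibbs lam1 lam2 g)
      = lam2 * KLdiv ρ (gibbs lam1 lam2 g) := by
  rw [freeEnergy_eq_KLdiv_gibbs hlam1 hlam2 hg hgC hρ,
    freeEnergy_eq_KLdiv_gibbs hlam1 hlam2 hg hgC (admissible_gibbs hlam1 hlam2 hg hgC),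
    KLdiv_self]
  ring

end Gibbs

section Lfun

variable {m n : ℕ} (lam1 lam2 : ℝ) (f : E m → E n → ℝ) (p : E m → ℝ) (q : E n → ℝ)

theorem Lfun_eq_freeEnergy_left :
    Lfun lam1 lam2 f p q
      = freeEnergy lam1 lam2 (fun x => ∫ y, f x y * q y) p - Reg lam1 lam2 q := by
  have hmul : ∀ x, ∫ y, f x y * p x * q y = (∫ y, f x y * q y) * p x := fun x => by
    rw [← integral_mul_const]; congr 1; funext y; ring
  simp only [Lfun, freeEnergy, hmul]

theorem Lfun_eq_freeEnergy_right {C : ℝ} (hf : Measurable fun z : E m × E n => f z.1 z.2)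
    (hfC : ∀ x y, |f x y| ≤ C) (hp : Integrable p) (hq : Integrable q) :
    Lfun lam1 lam2 f p q
      = Reg lam1 lam2 p - freeEnergy lam1 lam2 (fun y => -∫ x, f x y * p x) q := by
  simp only [Lfun, freeEnergy, integral_integral_mul_mul_swap hf hfC hp hq, neg_mul,
    integral_neg]
  ring

end Lfun

/-- The max-min (duality) gap at `(p̄, q̄)` controls the KL distance to the
Gibbs best responses: `L(p̄, q̄*) − L(p̄*, q̄) ≥ λ₂(KL(p̄‖p̄*) + KL(q̄‖q̄*))`. -/
theorem duality_gap_controls_KL (m n : ℕ) (lam1 lam2 : ℝ)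
    (hlam1 : 0 < lam1) (hlam2 : 0 < lam2)
    (f : E m → E n → ℝ)
    (hf_meas : Measurable (fun z : E m × E n => f z.1 z.2))
    (hf_bdd : ∀ x y, |f x y| ≤ 1)
    (pbar : E m → ℝ) (qbar : E n → ℝ)
    (hpbar : Admissible pbar) (hqbar : Admissible qbar)
    (pbarStar : E m → ℝ) (qbarStar : E n → ℝ)
    (hpbarStar : ∀ x, pbarStar x
      = Real.exp (-lam2⁻¹ * ((∫ y, f x y * qbar y) + lam1 * ‖x‖ ^ 2))
        / ∫ x', Real.exp (-lam2⁻¹ * ((∫ y, f x' y * qbar y) + lam1 * ‖x'‖ ^ 2)))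
    (hqbarStar : ∀ y, qbarStar y
      = Real.exp (lam2⁻¹ * ((∫ x, f x y * pbar x) - lam1 * ‖y‖ ^ 2))
        / ∫ y', Real.exp (lam2⁻¹ * ((∫ x, f x y' * pbar x) - lam1 * ‖y'‖ ^ 2))) :
    lam2 * (KLdiv pbar pbarStar + KLdiv qbar qbarStar)
      ≤ Lfun lam1 lam2 f pbar qbarStar - Lfun lam1 lam2 f pbarStar qbar := by
  set h : E m → ℝ := fun x => ∫ y, f x y * qbar y
  set k : E n → ℝ := fun y => -∫ x, f x y * pbar x
  have hh : Measurable h := measurable_integral_mul_snd hf_meas hqbar.1.1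
  have hk : Measurable k := (measurable_integral_mul_fst hf_meas hpbar.1.1).neg
  have hhC (x : E m) : |h x| ≤ 1 := hqbar.1.abs_integral_mul_le (hf_bdd x)
  have hkC (y : E n) : |k y| ≤ 1 := by
    rw [abs_neg]; exact hpbar.1.abs_integral_mul_le (hf_bdd · y)
  have hqk (y : E n) : exp (lam2⁻¹ * ((∫ x, f x y * pbar x) - lam1 * ‖y‖ ^ 2))
      = gibbsWeight lam1 lam2 k y := by rw [gibbsWeight]; simp only [k]; ring_nf
  obtain rfl : pbarStar = gibbs lam1 lam2 h := funext hpbarStar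
  obtain rfl : qbarStar = gibbs lam1 lam2 k := funext fun y => by simp only [hqbarStar, hqk, gibbs]
  have hP := freeEnergy_sub_freeEnergy_gibbs hlam1 hlam2 hh hhC hpbar
  have hQ := freeEnergy_sub_freeEnergy_gibbs hlam1 hlam2 hk hkC hqbar
  have hLbar := (Lfun_eq_freeEnergy_left lam1 lam2 f pbar qbar).symm.trans
    (Lfun_eq_freeEnergy_right lam1 lam2 f pbar qbar hf_meas hf_bdd hpbar.1.integrable
      hqbar.1.integrable)
  rw [Lfun_eq_freeEnergy_right lam1 lam2 f pbar _ hf_meas hf_bdd hpbar.1.integrable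
    (isDensity_gibbs hlam1 hlam2 hk hkC).integrable, Lfun_eq_freeEnergy_left]
  linarith
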